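/- arXiv:2301.05157 — 4 statements merged into one kernel-verified Lean document; each statement's English description precedes it below -/
import Mathlib

section
/- Let $u^e \in H^1([0,T],\mathbb{R})$ with $u^e(0) \neq 0$, and let $\boldsymbol{u}^e : L^2([0,T],\mathbb{R}) \to L^2([0,T],\mathbb{R})$ be the convolution operator $(\boldsymbol{u}^e f)(t) = \int_0^t u^e(t-s) f(s)\,ds$. Then $\boldsymbol{u}^e$ is injective. -/
open MeasureTheory Set Filter
open scoped Topology ENNReal

/-- A continuous function a.e. zero on `Ioo a b` vanishes on `Icc a b`. -/
lemma volterra_aux_cont_ae_zero {a b : ℝ} (hab : a < b) {φ : ℝ → ℝ} (hφ : Continuous φ)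
    (h : ∀ᵐ x ∂(volume : Measure ℝ), x ∈ Ioo a b → φ x = 0) :
    ∀ x ∈ Icc a b, φ x = 0 := by
  have hIoo : EqOn φ 0 (Ioo a b) := by
    intro x hx
    by_contra hne
    have hUopen : IsOpen (Ioo a b ∩ φ ⁻¹' ({0}ᶜ)) :=
      isOpen_Ioo.inter (isOpen_compl_singleton.preimage hφ)
    have hUpos : 0 < volume (Ioo a b ∩ φ ⁻¹' ({0}ᶜ)) :=
      hUopen.measure_pos volume ⟨x, hx, hne⟩
    rw [ae_iff] at h
    have hz : volume (Ioo a b ∩ φ ⁻¹' ({0}ᶜ)) = 0 :=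
      measure_mono_null (fun y hy => by
        simp only [mem_setOf_eq, Classical.not_imp]
        exact ⟨hy.1, hy.2⟩) h
    exact absurd hz hUpos.ne'
  have hcl : EqOn φ 0 (closure (Ioo a b)) := hIoo.closure hφ continuous_const
  rw [closure_Ioo hab.ne] at hcl
  exact fun x hx => hcl hx

lemma volterra_aux_fubini {t : ℝ} (h0t : (0:ℝ) ≤ t)
    {K h : ℝ → ℝ} (hKint : Integrable K (volume : Measure ℝ))
    (hhint : Integrable h (volume : Measure ℝ)) :
    ∫ s in (0:ℝ)..t, (∫ r in (0:ℝ)..(t - s), K r) * h s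
      = ∫ r in (0:ℝ)..t, K r * (∫ s in (0:ℝ)..(t - r), h s) := by
  set A : Set (ℝ × ℝ) := {p | p.1 ∈ Ioc (0:ℝ) t ∧ p.2 ∈ Ioc (0:ℝ) (t - p.1)} with hAdef
  have hA : MeasurableSet A := by
    apply MeasurableSet.inter
    · exact (measurable_fst (measurableSet_Ioc (a := (0:ℝ)) (b := t)))
    · apply MeasurableSet.inter
      · exact measurableSet_lt measurable_const measurable_snd
      · exact measurableSet_le measurable_snd (measurable_const.sub measurable_fst)
  set F : ℝ × ℝ → ℝ := A.indicator (fun p => K p.2 * h p.1) with hFdef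
  have hbase : Integrable (fun p : ℝ × ℝ => K p.2 * h p.1) (volume.prod volume) := by
    have h1 : Integrable (fun p : ℝ × ℝ => h p.1 * K p.2) (volume.prod volume) :=
      hhint.mul_prod hKint
    simpa [mul_comm] using h1
  have hFint : Integrable F (volume.prod volume) := hbase.indicator hA
  have swap :
      ∫ s, (∫ r, F (s, r) ∂(volume : Measure ℝ)) ∂(volume : Measure ℝ)
        = ∫ r, (∫ s, F (s, r) ∂(volume : Measure ℝ)) ∂(volume : Measure ℝ) :=
    integral_integral_swap (f := fun s r => F (s, r)) hFint
  have hmemA : ∀ s r : ℝ, (s, r) ∈ A ↔ s ∈ Ioc (0:ℝ) t ∧ r ∈ Ioc (0:ℝ) (t - s) := by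
    intro s r; rfl
  -- left iterated integral
  have hL : (fun s => ∫ r, F (s, r) ∂(volume : Measure ℝ))
      = (Ioc (0:ℝ) t).indicator (fun s => (∫ r in (0:ℝ)..(t - s), K r) * h s) := by
    funext s
    by_cases hs : s ∈ Ioc (0:ℝ) t
    · rw [indicator_of_mem hs]
      have hfr : (fun r => F (s, r)) = (Ioc (0:ℝ) (t - s)).indicator (fun r => K r * h s) := by
        funext r
        by_cases hr : r ∈ Ioc (0:ℝ) (t - s)
        · rw [indicator_of_mem hr, hFdef, indicator_of_mem ((hmemA s r).2 ⟨hs, hr⟩)]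
        · rw [indicator_of_notMem hr, hFdef,
            indicator_of_notMem (fun hmem => hr ((hmemA s r).1 hmem).2)]
      rw [hfr, integral_indicator measurableSet_Ioc,
        ← intervalIntegral.integral_of_le (by linarith [hs.2] : (0:ℝ) ≤ t - s),
        intervalIntegral.integral_mul_const]
    · rw [indicator_of_notMem hs]
      have hfr : (fun r => F (s, r)) = fun _ => (0:ℝ) := by
        funext r
        rw [hFdef, indicator_of_notMem (fun hmem => hs ((hmemA s r).1 hmem).1)]
      rw [hfr, integral_zero]
  -- right iterated integral
  have hR : (fun r => ∫ s, F (s, r) ∂(volume : Measure ℝ))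
      = (Ioc (0:ℝ) t).indicator (fun r => K r * (∫ s in (0:ℝ)..(t - r), h s)) := by
    funext r
    by_cases hr : r ∈ Ioc (0:ℝ) t
    · rw [indicator_of_mem hr]
      have hfs : (fun s => F (s, r)) = (Ioc (0:ℝ) (t - r)).indicator (fun s => K r * h s) := by
        funext s
        by_cases hs : s ∈ Ioc (0:ℝ) (t - r)
        · have hsIoc : s ∈ Ioc (0:ℝ) t := ⟨hs.1, le_trans hs.2 (by linarith [hr.1])⟩
          have hrIoc : r ∈ Ioc (0:ℝ) (t - s) := ⟨hr.1, by linarith [hs.2]⟩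
          rw [indicator_of_mem hs, hFdef, indicator_of_mem ((hmemA s r).2 ⟨hsIoc, hrIoc⟩)]
        · rw [indicator_of_notMem hs, hFdef, indicator_of_notMem]
          intro hmem
          obtain ⟨h1, h2⟩ := (hmemA s r).1 hmem
          exact hs ⟨h1.1, by linarith [h2.2]⟩
      rw [hfs, integral_indicator measurableSet_Ioc,
        ← intervalIntegral.integral_of_le (by linarith [hr.2] : (0:ℝ) ≤ t - r),
        intervalIntegral.integral_const_mul]
    · rw [indicator_of_notMem hr]
      have hfs : (fun s => F (s, r)) = fun _ => (0:ℝ) := by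
        funext s
        rw [hFdef, indicator_of_notMem]
        intro hmem
        obtain ⟨h1, h2⟩ := (hmemA s r).1 hmem
        exact hr ⟨h2.1, le_trans h2.2 (by linarith [h1.1])⟩
      rw [hfs, integral_zero]
  rw [hL, hR] at swap
  rw [integral_indicator measurableSet_Ioc, integral_indicator measurableSet_Ioc] at swap
  rw [intervalIntegral.integral_of_le h0t, intervalIntegral.integral_of_le h0t]
  exact swap

lemma volterra_aux_cont_conv {K H : ℝ → ℝ} (hKint : Integrable K (volume : Measure ℝ))
    (hH : Continuous H) {M : ℝ} (hM : ∀ x, |H x| ≤ M) :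
    Continuous (fun t => ∫ r, (Ioc (0:ℝ) t).indicator (fun r' => K r' * H (t - r')) r
      ∂(volume : Measure ℝ)) := by
  have hM0 : 0 ≤ M := le_trans (abs_nonneg _) (hM 0)
  rw [continuous_iff_continuousAt]
  intro t₀
  apply continuousAt_of_dominated (bound := fun r => ‖K r‖ * M)
  · exact Filter.Eventually.of_forall fun t =>
      ((hKint.aestronglyMeasurable.mul
        ((hH.comp (continuous_const.sub continuous_id)).aestronglyMeasurable)).indicator
        measurableSet_Ioc)
  · refine Filter.Eventually.of_forall fun t => Filter.Eventually.of_forall fun r => ?_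
    by_cases hr : r ∈ Ioc (0:ℝ) t
    · rw [indicator_of_mem hr]
      calc ‖K r * H (t - r)‖ = ‖K r‖ * |H (t - r)| := by
            rw [norm_mul]; rfl
        _ ≤ ‖K r‖ * M := mul_le_mul_of_nonneg_left (hM _) (norm_nonneg _)
    · rw [indicator_of_notMem hr]
      simp only [norm_zero]
      positivity
  · exact hKint.norm.mul_const M
  · have hne : ∀ᵐ r : ℝ ∂volume, r ≠ t₀ := by
      rw [ae_iff]
      refine measure_mono_null ?_ (measure_singleton t₀)
      intro r hr
      simpa using hr
    filter_upwards [hne] with r hr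
    by_cases hr0 : r ≤ 0
    · have hzero : (fun t => (Ioc (0:ℝ) t).indicator (fun r' => K r' * H (t - r')) r)
          = fun _ => (0:ℝ) :=
        funext fun t => indicator_of_notMem (fun hmem => absurd hmem.1 (not_lt.2 hr0)) _
      rw [hzero]; exact continuousAt_const
    · push_neg at hr0
      rcases lt_or_gt_of_ne hr with hlt | hgt
      · have hev : ∀ᶠ t in nhds t₀,
            K r * H (t - r) = (Ioc (0:ℝ) t).indicator (fun r' => K r' * H (t - r')) r := by
          filter_upwards [isOpen_Ioi.eventually_mem (show t₀ ∈ Ioi r from hlt)] with t ht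
          rw [indicator_of_mem (mem_Ioc.2 ⟨hr0, le_of_lt ht⟩)]
        exact ((continuous_const.mul
          (hH.comp (continuous_id.sub continuous_const))).continuousAt).congr hev
      · have hev : ∀ᶠ t in nhds t₀,
            (0:ℝ) = (Ioc (0:ℝ) t).indicator (fun r' => K r' * H (t - r')) r := by
          filter_upwards [isOpen_Iio.eventually_mem (show t₀ ∈ Iio r from hgt)] with t ht
          rw [indicator_of_notMem (fun hmem => absurd hmem.2 (not_le.2 ht))]
        exact continuousAt_const.congr hev

lemma volterra_aux_gronwall {T C : ℝ} {H : ℝ → ℝ} (hH : Continuous H)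
    (hbd : ∀ t ∈ Icc (0:ℝ) T, H t ^ 2 ≤ C * ∫ s in (0:ℝ)..t, H s ^ 2) :
    ∀ t ∈ Icc (0:ℝ) T, H t = 0 := by
  set φ := fun t => ∫ s in (0:ℝ)..t, H s ^ 2 with hφdef
  have hH2 : Continuous fun s => H s ^ 2 := hH.pow 2
  have hφc : Continuous φ :=
    intervalIntegral.continuous_primitive (fun a b => hH2.intervalIntegrable a b) 0
  have hφnn : ∀ t ∈ Icc (0:ℝ) T, 0 ≤ φ t := fun t ht =>
    intervalIntegral.integral_nonneg ht.1 (fun s _ => sq_nonneg _)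
  have hd : ∀ t ∈ Ico (0:ℝ) T, HasDerivWithinAt φ (H t ^ 2) (Ici t) t := fun t _ =>
    ((hH2.integral_hasStrictDerivAt 0 t).hasDerivAt).hasDerivWithinAt
  have key := norm_le_gronwallBound_of_norm_deriv_right_le (δ := 0) (K := C) (ε := 0)
    hφc.continuousOn hd (by simp [hφdef]) ?_
  · intro t ht
    have hφ0 : φ t = 0 := by
      have := key t ht
      rw [gronwallBound_ε0] at this
      simp only [zero_mul] at this
      have := le_antisymm ((Real.norm_of_nonneg (hφnn t ht)) ▸ this) (hφnn t ht)
      linarith [this]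
    have h1 : H t ^ 2 ≤ 0 := by
      have := hbd t ht
      rw [hφdef] at hφ0
      simp only at hφ0
      rw [hφ0] at this
      linarith
    have := sq_nonneg (H t)
    have h2 : H t ^ 2 = 0 := le_antisymm h1 this
    exact pow_eq_zero_iff (by norm_num) |>.1 h2
  · intro x hx
    rw [Real.norm_of_nonneg (sq_nonneg _), Real.norm_of_nonneg (hφnn x (Ico_subset_Icc_self hx)),
      add_zero]
    exact hbd x (Ico_subset_Icc_self hx)

lemma volterra_aux_lebesgue {h : ℝ → ℝ} (hhint : Integrable h (volume : Measure ℝ))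
    (hzero : ∀ x : ℝ, (∫ s in (0:ℝ)..x, h s) = 0) :
    ∀ᵐ x ∂(volume : Measure ℝ), h x = 0 := by
  have hloc : LocallyIntegrable h volume := hhint.locallyIntegrable
  filter_upwards [IsUnifLocDoublingMeasure.ae_tendsto_average (volume : Measure ℝ) hloc 1] with x hx
  have hmem : ∀ᶠ j in (𝓝[>] (0:ℝ)), x ∈ Metric.closedBall x (1 * j) := by
    filter_upwards [self_mem_nhdsWithin] with j hj
    exact Metric.mem_closedBall_self (by simpa using le_of_lt (mem_Ioi.1 hj))
  have h1 : Tendsto (fun j : ℝ => ⨍ y in Metric.closedBall x j, h y ∂volume)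
      (𝓝[>] 0) (𝓝 (h x)) := hx (fun _ => x) id tendsto_id hmem
  have h2 : Tendsto (fun j : ℝ => ⨍ y in Metric.closedBall x j, h y ∂volume)
      (𝓝[>] 0) (𝓝 0) := by
    apply Tendsto.congr' _ tendsto_const_nhds
    filter_upwards [self_mem_nhdsWithin] with j hj
    have hj0 : (0:ℝ) < j := mem_Ioi.1 hj
    have hint0 : ∫ y in Metric.closedBall x j, h y ∂volume = 0 := by
      rw [Real.closedBall_eq_Icc, MeasureTheory.integral_Icc_eq_integral_Ioc,
        ← intervalIntegral.integral_of_le (by linarith : x - j ≤ x + j)]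
      have hadd := intervalIntegral.integral_add_adjacent_intervals
        (a := (0:ℝ)) (b := x - j) (c := x + j)
        (hhint.intervalIntegrable) (hhint.intervalIntegrable)
      have e1 := hzero (x - j)
      have e2 := hzero (x + j)
      linarith
    rw [setAverage_eq, hint0]
    simp
  exact tendsto_nhds_unique h1 h2

lemma volterra_aux_CS {t : ℝ} (h0t : (0:ℝ) ≤ t) {K H : ℝ → ℝ}
    (hK2 : MemLp K 2 (volume : Measure ℝ)) (hH : Continuous H) {M : ℝ} (hM : ∀ x, |H x| ≤ M) :
    |∫ r in (0:ℝ)..t, K r * H (t - r)| ≤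
      Real.sqrt (∫ r, K r ^ 2 ∂(volume : Measure ℝ)) * Real.sqrt (∫ s in (0:ℝ)..t, H s ^ 2) := by
  set μt := (volume : Measure ℝ).restrict (Ioc (0:ℝ) t) with hμt
  haveI : IsFiniteMeasure μt := by
    constructor
    rw [hμt, Measure.restrict_apply_univ]
    exact measure_Ioc_lt_top
  have hHc : Continuous fun r => H (t - r) := hH.comp (continuous_const.sub continuous_id)
  have h2 : ENNReal.ofReal (2:ℝ) = (2 : ℝ≥0∞) := by norm_num
  have hfK : MemLp (fun r => |K r|) (ENNReal.ofReal (2:ℝ)) μt := by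
    rw [h2]
    simpa [Real.norm_eq_abs] using (hK2.restrict (Ioc (0:ℝ) t)).norm
  have hgH : MemLp (fun r => |H (t - r)|) (ENNReal.ofReal (2:ℝ)) μt := by
    rw [h2]
    refine MemLp.mono_exponent ?_ le_top
    exact memLp_top_of_bound (hHc.abs.aestronglyMeasurable) M
      (Filter.Eventually.of_forall fun r => by
        simpa [Real.norm_eq_abs, abs_abs] using hM (t - r))
  have hconj : Real.HolderConjugate 2 2 := Real.holderConjugate_iff.2 ⟨one_lt_two, by norm_num⟩
  have hCS := integral_mul_le_Lp_mul_Lq_of_nonneg (μ := μt) hconj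
    (Filter.Eventually.of_forall fun r => abs_nonneg (K r))
    (Filter.Eventually.of_forall fun r => abs_nonneg (H (t - r)))
    hfK hgH
  -- rewrite rpow as pow / sqrt
  have hrw1 : ∀ x : ℝ, |x| ^ (2:ℝ) = x ^ 2 := by
    intro x
    rw [show (2:ℝ) = ((2:ℕ):ℝ) by norm_num, Real.rpow_natCast, sq_abs]
  have hCS' : (∫ r, |K r| * |H (t - r)| ∂μt)
      ≤ (∫ r, K r ^ 2 ∂μt) ^ ((1:ℝ)/2) * (∫ r, H (t - r) ^ 2 ∂μt) ^ ((1:ℝ)/2) := by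
    calc (∫ r, |K r| * |H (t - r)| ∂μt)
        ≤ (∫ r, |K r| ^ (2:ℝ) ∂μt) ^ (1/(2:ℝ)) * (∫ r, |H (t - r)| ^ (2:ℝ) ∂μt) ^ (1/(2:ℝ)) := hCS
      _ = (∫ r, K r ^ 2 ∂μt) ^ ((1:ℝ)/2) * (∫ r, H (t - r) ^ 2 ∂μt) ^ ((1:ℝ)/2) := by
          simp only [hrw1]
  -- abs of the interval integral
  have habs : |∫ r in (0:ℝ)..t, K r * H (t - r)| ≤ ∫ r, |K r| * |H (t - r)| ∂μt := by
    rw [intervalIntegral.integral_of_le h0t]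
    calc |∫ r in Ioc (0:ℝ) t, K r * H (t - r)| = ‖∫ r in Ioc (0:ℝ) t, K r * H (t - r)‖ :=
          (Real.norm_eq_abs _).symm
      _ ≤ ∫ r in Ioc (0:ℝ) t, ‖K r * H (t - r)‖ := norm_integral_le_integral_norm _
      _ = ∫ r, |K r| * |H (t - r)| ∂μt := by
          simp only [Real.norm_eq_abs, abs_mul, hμt]
  -- first factor bound
  have hKint2 : Integrable (fun r => K r ^ 2) volume := hK2.integrable_sq
  have hfac1 : (∫ r, K r ^ 2 ∂μt) ≤ ∫ r, K r ^ 2 ∂(volume : Measure ℝ) := by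
    rw [hμt]
    exact setIntegral_le_integral hKint2 (Filter.Eventually.of_forall fun r => sq_nonneg _)
  have hfac1nn : (0:ℝ) ≤ ∫ r, K r ^ 2 ∂μt :=
    integral_nonneg fun r => sq_nonneg _
  -- second factor : change of variables
  have hfac2 : (∫ r, H (t - r) ^ 2 ∂μt) = ∫ s in (0:ℝ)..t, H s ^ 2 := by
    rw [hμt, ← intervalIntegral.integral_of_le h0t]
    have := intervalIntegral.integral_comp_sub_left (a := (0:ℝ)) (b := t)
      (fun s => H s ^ 2) t
    simpa using this
  have hfac2nn : (0:ℝ) ≤ ∫ s in (0:ℝ)..t, H s ^ 2 :=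
    intervalIntegral.integral_nonneg h0t fun s _ => sq_nonneg _
  calc |∫ r in (0:ℝ)..t, K r * H (t - r)|
      ≤ (∫ r, K r ^ 2 ∂μt) ^ ((1:ℝ)/2) * (∫ r, H (t - r) ^ 2 ∂μt) ^ ((1:ℝ)/2) :=
        le_trans habs hCS'
    _ = Real.sqrt (∫ r, K r ^ 2 ∂μt) * Real.sqrt (∫ r, H (t - r) ^ 2 ∂μt) := by
        rw [Real.sqrt_eq_rpow, Real.sqrt_eq_rpow]
    _ ≤ Real.sqrt (∫ r, K r ^ 2 ∂(volume : Measure ℝ)) * Real.sqrt (∫ s in (0:ℝ)..t, H s ^ 2) := by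
        rw [hfac2]
        exact mul_le_mul_of_nonneg_right (Real.sqrt_le_sqrt hfac1) (Real.sqrt_nonneg _)

/-- Injectivity of the Volterra convolution operator with an `H¹` kernel `uᵉ`
with `uᵉ 0 ≠ 0`. -/
theorem volterra_convolution_injective
    (T : ℝ) (hT : 0 < T) (ue : ℝ → ℝ)
    (hH1 : ∃ ue' : ℝ → ℝ,
      MemLp ue' 2 (volume.restrict (Icc (0:ℝ) T)) ∧
      ∀ t ∈ Icc (0:ℝ) T, ue t = ue 0 + ∫ s in (0:ℝ)..t, ue' s)
    (h0 : ue 0 ≠ 0)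
    (f g : ℝ → ℝ)
    (hf : MemLp f 2 (volume.restrict (Icc (0:ℝ) T)))
    (hg : MemLp g 2 (volume.restrict (Icc (0:ℝ) T)))
    (heq : ∀ᵐ t ∂(volume.restrict (Icc (0:ℝ) T)),
      (∫ s in (0:ℝ)..t, ue (t - s) * f s) = ∫ s in (0:ℝ)..t, ue (t - s) * g s) :
    f =ᵐ[volume.restrict (Icc (0:ℝ) T)] g := by
  haveI : IsFiniteMeasure (volume.restrict (Icc (0:ℝ) T)) := by
    constructor
    rw [Measure.restrict_apply_univ]
    exact measure_Icc_lt_top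
  obtain ⟨k, hk2, hue⟩ := hH1
  -- measurable representatives, truncated to [0,T]
  have hkk₀ : k =ᵐ[volume.restrict (Icc (0:ℝ) T)] hk2.1.mk k := hk2.1.ae_eq_mk
  set K := (Icc (0:ℝ) T).indicator (hk2.1.mk k) with hKdef
  have hK2 : MemLp K 2 (volume : Measure ℝ) :=
    (memLp_indicator_iff_restrict measurableSet_Icc).2 (hk2.ae_eq hkk₀)
  have hKint : Integrable K (volume : Measure ℝ) := by
    rw [hKdef, integrable_indicator_iff measurableSet_Icc]
    exact (hk2.ae_eq hkk₀).integrable (by norm_num)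
  have hff₀ : f =ᵐ[volume.restrict (Icc (0:ℝ) T)] hf.1.mk f := hf.1.ae_eq_mk
  have hgg₀ : g =ᵐ[volume.restrict (Icc (0:ℝ) T)] hg.1.mk g := hg.1.ae_eq_mk
  set h : ℝ → ℝ := (Icc (0:ℝ) T).indicator (fun x => hf.1.mk f x - hg.1.mk g x) with hhdef
  have hh2 : MemLp h 2 (volume : Measure ℝ) := by
    refine (memLp_indicator_iff_restrict measurableSet_Icc).2 ?_
    exact ((hf.ae_eq hff₀).sub (hg.ae_eq hgg₀))
  have hhint : Integrable h (volume : Measure ℝ) := by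
    rw [hhdef, integrable_indicator_iff measurableSet_Icc]
    exact ((hf.ae_eq hff₀).sub (hg.ae_eq hgg₀)).integrable (by norm_num)
  set H : ℝ → ℝ := fun x => ∫ s in (0:ℝ)..x, h s with hHdef
  have hHcont : Continuous H :=
    intervalIntegral.continuous_primitive (fun a b => hhint.intervalIntegrable) 0
  set M : ℝ := ∫ x, ‖h x‖ ∂(volume : Measure ℝ) with hMdef
  have hMbd : ∀ x, |H x| ≤ M := by
    intro x
    calc |H x| = ‖∫ s in (0:ℝ)..x, h s‖ := rfl
      _ ≤ ∫ s in uIoc (0:ℝ) x, ‖h s‖ ∂volume := intervalIntegral.norm_integral_le_integral_norm_uIoc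
      _ ≤ M := setIntegral_le_integral hhint.norm
          (Eventually.of_forall fun s => norm_nonneg _)
  set V : ℝ → ℝ := fun x => ∫ s in (0:ℝ)..x, K s with hVdef
  have hVcont : Continuous V :=
    intervalIntegral.continuous_primitive (fun a b => hKint.intervalIntegrable) 0
  set U : ℝ → ℝ := fun x => ue 0 + V x with hUdef
  have hUcont : Continuous U := continuous_const.add hVcont
  have hueU : ∀ x ∈ Icc (0:ℝ) T, ue x = U x := by
    intro x hx
    rw [hue x hx, hUdef]
    simp only
    congr 1
    rw [hVdef]
    simp only
    rw [intervalIntegral.integral_of_le hx.1, intervalIntegral.integral_of_le hx.1]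
    apply setIntegral_congr_ae measurableSet_Ioc
    have hae : ∀ᵐ s ∂(volume : Measure ℝ), s ∈ Icc (0:ℝ) T → k s = hk2.1.mk k s :=
      (ae_restrict_iff' measurableSet_Icc).1 hkk₀
    filter_upwards [hae] with s hs hsIoc
    have hsIcc : s ∈ Icc (0:ℝ) T := ⟨le_of_lt hsIoc.1, le_trans hsIoc.2 hx.2⟩
    rw [hs hsIcc, hKdef, indicator_of_mem hsIcc]
  set W : ℝ → ℝ := fun t => ∫ r in (0:ℝ)..t, K r * H (t - r) with hWdef
  -- pointwise description of h
  have hhFG : ∀ x ∈ Icc (0:ℝ) T, h x = hf.1.mk f x - hg.1.mk g x := by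
    intro x hx
    rw [hhdef, indicator_of_mem hx]
  -- the key a.e. identity
  have hkey : ∀ᵐ t ∂(volume.restrict (Icc (0:ℝ) T)), ue 0 * H t + W t = 0 := by
    filter_upwards [heq, ae_restrict_mem measurableSet_Icc] with t hteq ht
    have h0t : (0:ℝ) ≤ t := ht.1
    -- replace ue by U
    have hcongrU : ∀ φ : ℝ → ℝ,
        (∫ s in (0:ℝ)..t, ue (t - s) * φ s) = ∫ s in (0:ℝ)..t, U (t - s) * φ s := by
      intro φ
      apply intervalIntegral.integral_congr
      intro s hs
      rw [uIcc_of_le h0t] at hs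
      have hts : t - s ∈ Icc (0:ℝ) T := ⟨by linarith [hs.2], by linarith [hs.1, ht.2]⟩
      show ue (t - s) * φ s = U (t - s) * φ s
      rw [hueU _ hts]
    -- replace f by its representative (times indicator)
    have hrepl : ∀ (φ : ℝ → ℝ) (φ₀ : ℝ → ℝ),
        (φ =ᵐ[volume.restrict (Icc (0:ℝ) T)] φ₀) →
        (∫ s in (0:ℝ)..t, U (t - s) * φ s)
          = ∫ s in (0:ℝ)..t, U (t - s) * ((Icc (0:ℝ) T).indicator φ₀ s) := by
      intro φ φ₀ hφ
      rw [intervalIntegral.integral_of_le h0t, intervalIntegral.integral_of_le h0t]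
      apply setIntegral_congr_ae measurableSet_Ioc
      have hae : ∀ᵐ s ∂(volume : Measure ℝ), s ∈ Icc (0:ℝ) T → φ s = φ₀ s :=
        (ae_restrict_iff' measurableSet_Icc).1 hφ
      filter_upwards [hae] with s hs hsIoc
      have hsIcc : s ∈ Icc (0:ℝ) T := ⟨le_of_lt hsIoc.1, le_trans hsIoc.2 ht.2⟩
      rw [hs hsIcc, indicator_of_mem hsIcc]
    -- integrability facts
    have hFind : Integrable ((Icc (0:ℝ) T).indicator (hf.1.mk f)) (volume : Measure ℝ) := by
      rw [integrable_indicator_iff measurableSet_Icc]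
      exact (hf.ae_eq hff₀).integrable (by norm_num)
    have hGind : Integrable ((Icc (0:ℝ) T).indicator (hg.1.mk g)) (volume : Measure ℝ) := by
      rw [integrable_indicator_iff measurableSet_Icc]
      exact (hg.ae_eq hgg₀).integrable (by norm_num)
    have hiF : IntervalIntegrable (fun s => U (t - s) * ((Icc (0:ℝ) T).indicator (hf.1.mk f) s))
        volume 0 t :=
      (hFind.intervalIntegrable).continuousOn_mul
        ((hUcont.comp (continuous_const.sub continuous_id)).continuousOn)
    have hiG : IntervalIntegrable (fun s => U (t - s) * ((Icc (0:ℝ) T).indicator (hg.1.mk g) s))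
        volume 0 t :=
      (hGind.intervalIntegrable).continuousOn_mul
        ((hUcont.comp (continuous_const.sub continuous_id)).continuousOn)
    -- convolution with h vanishes
    have hconv0 : (∫ s in (0:ℝ)..t, U (t - s) * h s) = 0 := by
      have e1 : (∫ s in (0:ℝ)..t, U (t - s) * h s)
          = (∫ s in (0:ℝ)..t, U (t - s) * ((Icc (0:ℝ) T).indicator (hf.1.mk f) s))
            - ∫ s in (0:ℝ)..t, U (t - s) * ((Icc (0:ℝ) T).indicator (hg.1.mk g) s) := by
        rw [← intervalIntegral.integral_sub hiF hiG]
        apply intervalIntegral.integral_congr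
        intro s hs
        have : h s = (Icc (0:ℝ) T).indicator (hf.1.mk f) s
            - (Icc (0:ℝ) T).indicator (hg.1.mk g) s := by
          by_cases hsIcc : s ∈ Icc (0:ℝ) T
          · rw [hhdef, indicator_of_mem hsIcc, indicator_of_mem hsIcc, indicator_of_mem hsIcc]
          · rw [hhdef, indicator_of_notMem hsIcc, indicator_of_notMem hsIcc,
              indicator_of_notMem hsIcc, sub_zero]
        show U (t - s) * h s = U (t - s) * (Icc (0:ℝ) T).indicator (hf.1.mk f) s
          - U (t - s) * (Icc (0:ℝ) T).indicator (hg.1.mk g) s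
        rw [this, mul_sub]
      rw [e1, ← hrepl f (hf.1.mk f) hff₀, ← hrepl g (hg.1.mk g) hgg₀,
        ← hcongrU f, ← hcongrU g, hteq, sub_self]
    -- expand U and use Fubini
    have hhI : IntervalIntegrable h volume 0 t := hhint.intervalIntegrable
    have hiV : IntervalIntegrable (fun s => V (t - s) * h s) volume 0 t :=
      (hhI).continuousOn_mul ((hVcont.comp (continuous_const.sub continuous_id)).continuousOn)
    have hiC : IntervalIntegrable (fun s => ue 0 * h s) volume 0 t := hhI.const_mul _
    have e2 : (∫ s in (0:ℝ)..t, U (t - s) * h s)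
        = ue 0 * H t + ∫ s in (0:ℝ)..t, V (t - s) * h s := by
      have : (fun s => U (t - s) * h s) = fun s => ue 0 * h s + V (t - s) * h s := by
        funext s
        rw [hUdef]
        ring
      rw [this, intervalIntegral.integral_add hiC hiV, intervalIntegral.integral_const_mul, hHdef]
    have e3 : (∫ s in (0:ℝ)..t, V (t - s) * h s) = W t := by
      rw [hVdef, hWdef, hHdef]
      simp only
      exact volterra_aux_fubini h0t hKint hhint
    rw [e2, e3] at hconv0
    exact hconv0
  -- upgrade to everywhere on [0,T] using continuity
  set W' : ℝ → ℝ := fun t => ∫ r, (Ioc (0:ℝ) t).indicator (fun r' => K r' * H (t - r')) r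
      ∂(volume : Measure ℝ) with hW'def
  have hW'W : ∀ t, (0:ℝ) ≤ t → W' t = W t := by
    intro t ht
    rw [hW'def, hWdef]
    simp only
    rw [intervalIntegral.integral_of_le ht, integral_indicator measurableSet_Ioc]
  have hψcont : Continuous (fun t => ue 0 * H t + W' t) :=
    (continuous_const.mul hHcont).add (volterra_aux_cont_conv hKint hHcont hMbd)
  have hψ0 : ∀ t ∈ Icc (0:ℝ) T, ue 0 * H t + W' t = 0 := by
    apply volterra_aux_cont_ae_zero hT hψcont
    have := (ae_restrict_iff' measurableSet_Icc).1 hkey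
    filter_upwards [this] with x hx hxIoo
    have hxIcc : x ∈ Icc (0:ℝ) T := ⟨hxIoo.1.le, hxIoo.2.le⟩
    rw [hW'W x hxIcc.1]
    exact hx hxIcc
  have hkey' : ∀ t ∈ Icc (0:ℝ) T, ue 0 * H t = - W t := by
    intro t ht
    have := hψ0 t ht
    rw [hW'W t ht.1] at this
    linarith
  -- Grönwall
  have hHbd : ∀ t ∈ Icc (0:ℝ) T,
      H t ^ 2 ≤ ((Real.sqrt (∫ r, K r ^ 2 ∂(volume : Measure ℝ))) ^ 2 / (ue 0) ^ 2)
        * ∫ s in (0:ℝ)..t, H s ^ 2 := by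
    intro t ht
    have hCS := volterra_aux_CS ht.1 hK2 hHcont hMbd
    have hφnn : (0:ℝ) ≤ ∫ s in (0:ℝ)..t, H s ^ 2 :=
      intervalIntegral.integral_nonneg ht.1 fun s _ => sq_nonneg _
    have hWnn : (0:ℝ) ≤ |W t| := abs_nonneg _
    have hsq : W t ^ 2 ≤ (Real.sqrt (∫ r, K r ^ 2 ∂(volume : Measure ℝ))) ^ 2
        * ∫ s in (0:ℝ)..t, H s ^ 2 := by
      have h1 : |W t| ^ 2 ≤ (Real.sqrt (∫ r, K r ^ 2 ∂(volume : Measure ℝ))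
          * Real.sqrt (∫ s in (0:ℝ)..t, H s ^ 2)) ^ 2 := by
        apply pow_le_pow_left₀ hWnn hCS
      rw [sq_abs] at h1
      calc W t ^ 2 ≤ (Real.sqrt (∫ r, K r ^ 2 ∂(volume : Measure ℝ))
            * Real.sqrt (∫ s in (0:ℝ)..t, H s ^ 2)) ^ 2 := h1
        _ = (Real.sqrt (∫ r, K r ^ 2 ∂(volume : Measure ℝ))) ^ 2
            * (Real.sqrt (∫ s in (0:ℝ)..t, H s ^ 2)) ^ 2 := by rw [mul_pow]
        _ = (Real.sqrt (∫ r, K r ^ 2 ∂(volume : Measure ℝ))) ^ 2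
            * ∫ s in (0:ℝ)..t, H s ^ 2 := by rw [Real.sq_sqrt hφnn]
    have hu2 : (0:ℝ) < (ue 0) ^ 2 := by positivity
    rw [div_mul_eq_mul_div, le_div_iff₀ hu2]
    have hWH : (ue 0 * H t) ^ 2 = W t ^ 2 := by
      rw [hkey' t ht]
      ring
    nlinarith [hsq, hWH]
  have hH0 : ∀ t ∈ Icc (0:ℝ) T, H t = 0 := volterra_aux_gronwall hHcont hHbd
  -- H vanishes globally
  have hH0' : ∀ x : ℝ, H x = 0 := by
    intro x
    rcases le_or_gt x 0 with hx | hx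
    · rw [hHdef]
      simp only
      rw [intervalIntegral.integral_symm x 0, intervalIntegral.integral_of_le hx,
        integral_Ioc_eq_integral_Ioo]
      have : EqOn h 0 (Ioo x 0) := by
        intro s hs
        rw [hhdef, indicator_of_notMem (fun hmem => absurd hmem.1 (not_le.2 hs.2))]
        rfl
      rw [setIntegral_congr_fun measurableSet_Ioo this]
      simp
    · rcases le_or_gt x T with hxT | hxT
      · exact hH0 x ⟨hx.le, hxT⟩
      · have hHT := hH0 T ⟨hT.le, le_refl T⟩
        have hadd := intervalIntegral.integral_add_adjacent_intervals
          (a := (0:ℝ)) (b := T) (c := x)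
          hhint.intervalIntegrable hhint.intervalIntegrable
        have hz : (∫ s in T..x, h s) = 0 := by
          rw [intervalIntegral.integral_of_le hxT.le]
          have : EqOn h 0 (Ioc T x) := by
            intro s hs
            rw [hhdef, indicator_of_notMem (fun hmem => absurd hmem.2 (not_le.2 hs.1))]
            rfl
          rw [setIntegral_congr_fun measurableSet_Ioc this]
          simp
        have hHT' : (∫ s in (0:ℝ)..T, h s) = 0 := hHT
        rw [hHdef]
        simp only
        rw [← hadd, hHT', hz, add_zero]
  -- Lebesgue differentiation: h = 0 a.e.
  have hae0 : ∀ᵐ x ∂(volume : Measure ℝ), h x = 0 :=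
    volterra_aux_lebesgue hhint fun x => hH0' x
  -- conclusion
  have hae0' : ∀ᵐ x ∂(volume.restrict (Icc (0:ℝ) T)), h x = 0 := ae_restrict_of_ae hae0
  filter_upwards [hae0', hff₀, hgg₀, ae_restrict_mem measurableSet_Icc] with x h1 h2 h3 hx
  have := hhFG x hx
  rw [h1] at this
  rw [h2, h3]
  linarith [this]
end

section
/- Let $u^e \in H^1([0,T],\mathbb{R})$. Then for all $f \in L^2([0,T],\mathbb{R})$ and a.e. $t \in [0,T]$, the function $t \mapsto \int_t^T u^e(s-t) f(s)\,ds$ is absolutely continuous with derivative $-u^e(0) f(t) - \int_t^T \dot{u}^e(s-t) f(s)\,ds$ a.e., where $\dot{u}^e$ denotes the a.e.-derivative of $u^e$. -/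
open MeasureTheory Set

/-- For `uᵉ ∈ H¹([0,T])` with a.e. derivative `ue'` and `f ∈ L²([0,T])`, the function
`F t = ∫ₜᵀ uᵉ(s-t) f(s) ds` is absolutely continuous with a.e. derivative
`-uᵉ(0) f(t) - ∫ₜᵀ u̇ᵉ(s-t) f(s) ds`, i.e. it satisfies the fundamental theorem
of calculus with this derivative. -/
theorem adjoint_volterra_absolutely_continuous
    (T : ℝ) (hT : 0 < T) (ue ue' : ℝ → ℝ)
    (hue' : MemLp ue' 2 (volume.restrict (Icc (0:ℝ) T)))
    (hH1 : ∀ t ∈ Icc (0:ℝ) T, ue t = ue 0 + ∫ s in (0:ℝ)..t, ue' s)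
    (f : ℝ → ℝ) (hf : MemLp f 2 (volume.restrict (Icc (0:ℝ) T))) :
    ∀ t ∈ Icc (0:ℝ) T,
      (∫ s in t..T, ue (s - t) * f s)
        = (∫ s in (0:ℝ)..T, ue s * f s)
          + ∫ s in (0:ℝ)..t,
              (-(ue 0 * f s) - ∫ r in s..T, ue' (r - s) * f r) := by
  intro t ht
  obtain ⟨ht0, htT⟩ := ht
  have hIcc : MeasurableSet (Icc (0:ℝ) T) := measurableSet_Icc
  set g : ℝ → ℝ := (Icc (0:ℝ) T).indicator ue' with hg_def
  set h : ℝ → ℝ := (Icc (0:ℝ) T).indicator f with hh_def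
  have hgm : MemLp g 2 volume := (memLp_indicator_iff_restrict hIcc).2 hue'
  have hhm : MemLp h 2 volume := (memLp_indicator_iff_restrict hIcc).2 hf
  haveI hfin : IsFiniteMeasure (volume.restrict (Icc (0:ℝ) T)) := by
    constructor
    rw [Measure.restrict_apply_univ]
    simp [Real.volume_Icc]
  have hg1 : Integrable g volume := by
    rw [hg_def, integrable_indicator_iff hIcc]
    exact hue'.integrable one_le_two
  have hh1 : Integrable h volume := by
    rw [hh_def, integrable_indicator_iff hIcc]
    exact hf.integrable one_le_two
  set Ψ : ℝ → ℝ := fun x => ∫ u in (0:ℝ)..x, g u with hΨ_def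
  have hΨc : Continuous Ψ := hg1.continuous_primitive 0
  have hne : ∀ᵐ u : ℝ, u ≠ (0:ℝ) := by
    simp [ae_iff, measure_singleton]
  have hΨ0 : ∀ x : ℝ, x ≤ 0 → Ψ x = 0 := by
    intro x hx
    have hae : ∀ᵐ u : ℝ, u ∈ uIoc (0:ℝ) x → g u = (0:ℝ) := by
      filter_upwards [hne] with u hu hmem
      rw [uIoc_comm, uIoc_of_le hx] at hmem
      have : u ∉ Icc (0:ℝ) T := by
        intro hc
        exact hu (le_antisymm hmem.2 hc.1)
      exact indicator_of_notMem this ue'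
    calc Ψ x = ∫ u in (0:ℝ)..x, (0:ℝ) := intervalIntegral.integral_congr_ae hae
    _ = 0 := by simp
  have hue_eq : ∀ x ∈ Icc (0:ℝ) T, ue x = ue 0 + Ψ x := by
    intro x hx
    rw [hH1 x hx]
    congr 1
    apply intervalIntegral.integral_congr
    intro u hu
    rw [uIcc_of_le hx.1] at hu
    exact (indicator_of_mem (Icc_subset_Icc le_rfl hx.2 hu) ue').symm
  -- interval integrability of f on subintervals of [0, T]
  have hfII : IntervalIntegrable f volume 0 T := by
    rw [intervalIntegrable_iff, uIoc_of_le hT.le]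
    have hi : IntegrableOn f (Icc (0:ℝ) T) volume := hf.integrable one_le_two
    exact hi.mono_set Ioc_subset_Icc_self
  have hfII0t : IntervalIntegrable f volume 0 t := by
    apply hfII.mono_set
    rw [uIcc_of_le ht0, uIcc_of_le hT.le]
    exact Icc_subset_Icc le_rfl htT
  have hfIItT : IntervalIntegrable f volume t T := by
    apply hfII.mono_set
    rw [uIcc_of_le htT, uIcc_of_le hT.le]
    exact Icc_subset_Icc ht0 le_rfl
  have hΨfII : ∀ a b : ℝ, IntervalIntegrable f volume a b →
      IntervalIntegrable (fun s => Ψ (s - t) * f s) volume a b := fun a b hf' =>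
    hf'.continuousOn_mul ((hΨc.comp (continuous_sub_right t)).continuousOn)
  have hΨfII2 : ∀ a b : ℝ, IntervalIntegrable f volume a b →
      IntervalIntegrable (fun s => Ψ s * f s) volume a b := fun a b hf' =>
    hf'.continuousOn_mul hΨc.continuousOn
  -- translation invariance facts
  have hgs : ∀ s : ℝ, MemLp (fun r => g (r - s)) 2 volume := by
    intro s
    have hmp : MeasurePreserving (fun r : ℝ => r - s) volume volume :=
      measurePreserving_sub_right volume s
    have : MemLp g 2 (Measure.map (fun r : ℝ => r - s) volume) := by
      rw [hmp.map_eq]; exact hgm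
    exact this.comp_of_map hmp.aemeasurable
  have hq21 : (1 : ENNReal) / 1 = 1 / 2 + 1 / 2 := by
    rw [ENNReal.div_add_div_same, one_add_one_eq_two,
      ENNReal.div_self (by norm_num) (by norm_num),
      ENNReal.div_self (by norm_num) (by norm_num)]
  have hconv_int : ∀ s : ℝ, Integrable (fun r => g (r - s) * h r) volume := by
    intro s
    have h1 : MemLp ((fun r => g (r - s)) • h) 1 volume := hhm.smul (hgs s)
    rw [memLp_one_iff_integrable] at h1
    have : ((fun r => g (r - s)) • h) = fun r => g (r - s) * h r := rfl
    rwa [this] at h1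
  set M : ℝ := (eLpNorm g 2 volume).toReal * (eLpNorm h 2 volume).toReal with hM_def
  have hnormbound : ∀ s : ℝ, (∫ r, ‖g (r - s) * h r‖) ≤ M := by
    intro s
    have h1 : eLpNorm (fun r => g (r - s) * h r) 1 volume
        ≤ eLpNorm (fun r => g (r - s)) 2 volume * eLpNorm h 2 volume := by
      simpa using eLpNorm_le_eLpNorm_mul_eLpNorm'_of_norm (hgs s).aestronglyMeasurable
        hhm.aestronglyMeasurable (· * ·) (1 : NNReal)
        (Filter.Eventually.of_forall fun x => by simp [norm_mul]) (p := 2) (q := 2) (r := 1)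
    have h2 : eLpNorm (fun r => g (r - s)) 2 volume = eLpNorm g 2 volume := by
      have := eLpNorm_comp_measurePreserving (p := 2) hgm.aestronglyMeasurable
        (measurePreserving_sub_right volume s)
      exact this
    have haesm : AEStronglyMeasurable (fun r => g (r - s) * h r) volume :=
      (hgs s).aestronglyMeasurable.mul hhm.aestronglyMeasurable
    rw [integral_norm_eq_lintegral_enorm haesm, ← eLpNorm_one_eq_lintegral_enorm]
    calc (eLpNorm (fun r => g (r - s) * h r) 1 volume).toReal
        ≤ (eLpNorm g 2 volume * eLpNorm h 2 volume).toReal := by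
          apply ENNReal.toReal_mono
          · exact ENNReal.mul_ne_top hgm.eLpNorm_ne_top hhm.eLpNorm_ne_top
          · rw [← h2]; exact h1
    _ = M := ENNReal.toReal_mul
  -- the product kernel
  set P : ℝ × ℝ → ℝ :=
    fun p => (Ioc (0:ℝ) t).indicator (fun _ => (1:ℝ)) p.1 * (g (p.2 - p.1) * h p.2) with hP_def
  have hPaesm : AEStronglyMeasurable P (volume.prod volume) := by
    apply AEStronglyMeasurable.mul
    · exact ((measurable_const.indicator measurableSet_Ioc).comp
        measurable_fst).aestronglyMeasurable
    · apply AEStronglyMeasurable.mul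
      · have hq2 : Measure.QuasiMeasurePreserving (fun p : ℝ × ℝ => p.2 - p.1)
            (volume.prod volume) volume :=
          (quasiMeasurePreserving_sub_of_right_invariant volume volume).comp
            Measure.measurePreserving_swap.quasiMeasurePreserving
        exact hgm.aestronglyMeasurable.comp_quasiMeasurePreserving hq2
      · exact hhm.aestronglyMeasurable.comp_quasiMeasurePreserving
          Measure.quasiMeasurePreserving_snd
  have hPint : Integrable P (volume.prod volume) := by
    rw [integrable_prod_iff hPaesm]
    constructor
    · refine Filter.Eventually.of_forall fun s => ?_
      by_cases hs : s ∈ Ioc (0:ℝ) t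
      · simp only [hP_def, indicator_of_mem hs, one_mul]
        exact hconv_int s
      · simp only [hP_def, indicator_of_notMem hs, zero_mul]
        exact integrable_zero _ _ _
    · apply Integrable.mono' (g := (Ioc (0:ℝ) t).indicator (fun _ => M))
      · rw [integrable_indicator_iff measurableSet_Ioc]
        exact integrableOn_const (by simp [Real.volume_Ioc]) (by simp)
      · exact hPaesm.norm.integral_prod_right'
      · refine Filter.Eventually.of_forall fun s => ?_
        by_cases hs : s ∈ Ioc (0:ℝ) t
        · rw [indicator_of_mem hs]
          have heq : (fun r => ‖P (s, r)‖) = fun r => ‖g (r - s) * h r‖ := by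
            funext r
            simp only [hP_def, indicator_of_mem hs, one_mul]
          rw [heq, Real.norm_eq_abs,
            abs_of_nonneg (integral_nonneg fun r => norm_nonneg _)]
          exact hnormbound s
        · rw [indicator_of_notMem hs]
          have heq : (fun r => ‖P (s, r)‖) = fun _ => (0:ℝ) := by
            funext r
            simp only [hP_def, indicator_of_notMem hs, zero_mul, norm_zero]
          rw [heq]
          simp
  -- identify the inner integral with the Volterra kernel integral
  have hGs : ∀ s ∈ Ioc (0:ℝ) t, (∫ r, g (r - s) * h r) = ∫ r in s..T, ue' (r - s) * f r := by
    intro s hs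
    have h1 : (fun r => g (r - s) * h r)
        = (Icc s T).indicator (fun r => ue' (r - s) * f r) := by
      funext r
      by_cases hr : r ∈ Icc s T
      · rw [indicator_of_mem hr]
        have hr1 : r - s ∈ Icc (0:ℝ) T := ⟨by linarith [hr.1], by linarith [hr.2, hs.1.le]⟩
        have hr2 : r ∈ Icc (0:ℝ) T := ⟨le_trans hs.1.le hr.1, hr.2⟩
        rw [hg_def, hh_def, indicator_of_mem hr1, indicator_of_mem hr2]
      · rw [indicator_of_notMem hr]
        rw [mem_Icc, not_and_or, not_le, not_le] at hr
        rcases hr with h' | h'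
        · have hns : r - s ∉ Icc (0:ℝ) T := by
            intro hc
            have := hc.1
            linarith
          rw [hg_def, indicator_of_notMem hns, zero_mul]
        · have hns : r ∉ Icc (0:ℝ) T := by
            intro hc
            have := hc.2
            linarith
          rw [hh_def, indicator_of_notMem hns, mul_zero]
    rw [h1, integral_indicator measurableSet_Icc, integral_Icc_eq_integral_Ioc,
      ← intervalIntegral.integral_of_le (le_trans hs.2 htT)]
  have hleft : (∫ s, ∫ r, P (s, r))
      = ∫ s in (0:ℝ)..t, ∫ r in s..T, ue' (r - s) * f r := by
    have h1 : (fun s => ∫ r, P (s, r))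
        = (Ioc (0:ℝ) t).indicator (fun s => ∫ r, g (r - s) * h r) := by
      funext s
      by_cases hs : s ∈ Ioc (0:ℝ) t
      · rw [indicator_of_mem hs]
        simp only [hP_def, indicator_of_mem hs, one_mul]
      · rw [indicator_of_notMem hs]
        simp only [hP_def, indicator_of_notMem hs, zero_mul, integral_zero]
    rw [h1, integral_indicator measurableSet_Ioc, intervalIntegral.integral_of_le ht0]
    exact setIntegral_congr_fun measurableSet_Ioc fun s hs => hGs s hs
  have hinner : ∀ r : ℝ, (∫ s, P (s, r)) = h r * (Ψ r - Ψ (r - t)) := by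
    intro r
    have h1 : (fun s => P (s, r))
        = fun s => h r * ((Ioc (0:ℝ) t).indicator (fun s' => g (r - s')) s) := by
      funext s
      by_cases hs : s ∈ Ioc (0:ℝ) t
      · simp only [hP_def, indicator_of_mem hs, one_mul]
        ring
      · simp only [hP_def, indicator_of_notMem hs, zero_mul, mul_zero]
    rw [h1, integral_const_mul, integral_indicator measurableSet_Ioc]
    congr 1
    rw [← intervalIntegral.integral_of_le ht0,
      intervalIntegral.integral_comp_sub_left (fun x => g x) r, sub_zero]
    exact (intervalIntegral.integral_interval_sub_left
      hg1.intervalIntegrable hg1.intervalIntegrable).symm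
  have hright : (∫ r, ∫ s, P (s, r))
      = (∫ s in (0:ℝ)..T, Ψ s * f s) - ∫ s in t..T, Ψ (s - t) * f s := by
    have h1 : (fun r => ∫ s, P (s, r))
        = (Icc (0:ℝ) T).indicator (fun r => f r * (Ψ r - Ψ (r - t))) := by
      funext r
      rw [hinner r]
      by_cases hr : r ∈ Icc (0:ℝ) T
      · rw [indicator_of_mem hr, hh_def, indicator_of_mem hr]
      · rw [indicator_of_notMem hr, hh_def, indicator_of_notMem hr, zero_mul]
    rw [h1, integral_indicator measurableSet_Icc, integral_Icc_eq_integral_Ioc,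
      ← intervalIntegral.integral_of_le hT.le]
    have hsplit : (∫ r in (0:ℝ)..T, f r * (Ψ r - Ψ (r - t)))
        = (∫ r in (0:ℝ)..T, Ψ r * f r) - ∫ r in (0:ℝ)..T, Ψ (r - t) * f r := by
      rw [← intervalIntegral.integral_sub (hΨfII2 0 T hfII) (hΨfII 0 T hfII)]
      apply intervalIntegral.integral_congr
      intro x _
      ring
    rw [hsplit]
    congr 1
    rw [← intervalIntegral.integral_add_adjacent_intervals
      (hΨfII 0 t hfII0t) (hΨfII t T hfIItT)]
    have hzero : (∫ r in (0:ℝ)..t, Ψ (r - t) * f r) = 0 := by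
      have : (∫ r in (0:ℝ)..t, Ψ (r - t) * f r) = ∫ r in (0:ℝ)..t, (0:ℝ) := by
        apply intervalIntegral.integral_congr
        intro x hx
        rw [uIcc_of_le ht0] at hx
        show Ψ (x - t) * f x = 0
        rw [hΨ0 (x - t) (by linarith [hx.2]), zero_mul]
      rw [this]
      simp
    rw [hzero, zero_add]
  have hswap : (∫ s, ∫ r, P (s, r)) = ∫ r, ∫ s, P (s, r) :=
    integral_integral_swap hPint
  have hfub : (∫ s in (0:ℝ)..t, ∫ r in s..T, ue' (r - s) * f r)
      = (∫ s in (0:ℝ)..T, Ψ s * f s) - ∫ s in t..T, Ψ (s - t) * f s := by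
    rw [← hleft, hswap, hright]
  have hGint : IntervalIntegrable (fun s => ∫ r in s..T, ue' (r - s) * f r) volume 0 t := by
    have h2 : Integrable (fun s => ∫ r, P (s, r)) volume := hPint.integral_prod_left
    rw [intervalIntegrable_iff, uIoc_of_le ht0]
    apply (h2.integrableOn (s := Ioc (0:ℝ) t)).congr_fun _ measurableSet_Ioc
    intro s hs
    show (∫ r, P (s, r)) = ∫ r in s..T, ue' (r - s) * f r
    have h3 : (∫ r, P (s, r)) = ∫ r, g (r - s) * h r := by
      simp only [hP_def, indicator_of_mem hs, one_mul]
    rw [h3, hGs s hs]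
  have step1 : (∫ s in t..T, ue (s - t) * f s)
      = ue 0 * (∫ s in t..T, f s) + ∫ s in t..T, Ψ (s - t) * f s := by
    have heq : (∫ s in t..T, ue (s - t) * f s)
        = ∫ s in t..T, (ue 0 * f s + Ψ (s - t) * f s) := by
      apply intervalIntegral.integral_congr
      intro s hs
      rw [uIcc_of_le htT] at hs
      show ue (s - t) * f s = ue 0 * f s + Ψ (s - t) * f s
      rw [hue_eq (s - t) ⟨by linarith [hs.1], by linarith [hs.2]⟩]
      ring
    rw [heq, intervalIntegral.integral_add (hfIItT.const_mul _) (hΨfII t T hfIItT),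
      intervalIntegral.integral_const_mul]
  have step2 : (∫ s in (0:ℝ)..T, ue s * f s)
      = ue 0 * (∫ s in (0:ℝ)..T, f s) + ∫ s in (0:ℝ)..T, Ψ s * f s := by
    have heq : (∫ s in (0:ℝ)..T, ue s * f s)
        = ∫ s in (0:ℝ)..T, (ue 0 * f s + Ψ s * f s) := by
      apply intervalIntegral.integral_congr
      intro s hs
      rw [uIcc_of_le hT.le] at hs
      show ue s * f s = ue 0 * f s + Ψ s * f s
      rw [hue_eq s hs]
      ring
    rw [heq, intervalIntegral.integral_add (hfII.const_mul _) (hΨfII2 0 T hfII),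
      intervalIntegral.integral_const_mul]
  have step3 : (∫ s in (0:ℝ)..t, (-(ue 0 * f s) - ∫ r in s..T, ue' (r - s) * f r))
      = -(ue 0 * ∫ s in (0:ℝ)..t, f s)
        - ∫ s in (0:ℝ)..t, ∫ r in s..T, ue' (r - s) * f r := by
    have hneg : IntervalIntegrable (fun s => -(ue 0 * f s)) volume 0 t :=
      (hfII0t.const_mul (ue 0)).neg
    rw [intervalIntegral.integral_sub hneg hGint, intervalIntegral.integral_neg,
      intervalIntegral.integral_const_mul]
  have step4 : (∫ s in (0:ℝ)..t, f s) + (∫ s in t..T, f s) = ∫ s in (0:ℝ)..T, f s :=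
    intervalIntegral.integral_add_adjacent_intervals hfII0t hfIItT
  have step4' : ue 0 * (∫ s in (0:ℝ)..t, f s) + ue 0 * (∫ s in t..T, f s)
      = ue 0 * ∫ s in (0:ℝ)..T, f s := by
    rw [← mul_add, step4]
  rw [step1, step2, step3, hfub]
  linarith [step4']
end

section
/- Let $X$ be a Hilbert space, $K : X \to X$ an injective compact linear operator, $x_0, y_0 \in X$ with $y_0 = K x_0$, $y^\delta \in X$, $\alpha > 0$, and let $x_\alpha^\delta = (K^*K + \alpha\,\mathrm{id})^{-1} K^* y^\delta$. Then for all $R > 0$, $\|x_\alpha^\delta - x_0\|_X \le \frac{\|y_0 - y^\delta\|_X}{2\sqrt{\alpha}} + \mathscr{D}(R) + \frac{\sqrt{\alpha}}{2} R$, where $\mathscr{D}(R) = \inf\{\|x_0 - K^* v\|_X : v \in X, \|v\|_X \le R\}$. -/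
open MeasureTheory Set ContinuousLinearMap
open scoped InnerProductSpace

theorem tikhonov_aux (a b d δ s R : ℝ) (ha0 : 0 ≤ a) (hb0 : 0 ≤ b) (hd0 : 0 ≤ d)
    (hδ0 : 0 ≤ δ) (hR : 0 < R) (hs0 : 0 < s)
    (quad : a ^ 2 + s ^ 2 * b ^ 2 ≤ (δ + s ^ 2 * R) * a + s ^ 2 * d * b) :
    b ≤ δ / (2 * s) + d + s / 2 * R := by
  have hc0 : 0 ≤ δ + s ^ 2 * R := by positivity
  have q1 : s ^ 2 * b ^ 2 - s ^ 2 * d * b ≤ (δ + s ^ 2 * R) ^ 2 / 4 := by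
    nlinarith [sq_nonneg (2 * a - (δ + s ^ 2 * R))]
  have hfin : 2 * (s * b) ≤ δ + 2 * (s * d) + s ^ 2 * R := by
    nlinarith [q1, mul_nonneg (mul_nonneg hs0.le hd0) hc0,
      mul_nonneg hs0.le hb0, mul_nonneg hs0.le hd0]
  have h2s : (0:ℝ) < 2 * s := by positivity
  rw [div_add' _ _ _ (ne_of_gt h2s), div_add' _ _ _ (ne_of_gt h2s),
    le_div_iff₀ h2s]
  ring_nf
  ring_nf at hfin
  linarith

/-- Error bound for Tikhonov regularisation (no Galerkin projection): if
`(K*K + α id) x = K* yδ` and `y₀ = K x₀`, then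
`‖x - x₀‖ ≤ ‖y₀ - yδ‖/(2√α) + 𝒟(R) + (√α/2) R` for every `R > 0`, where
`𝒟(R) = inf {‖x₀ - K* v‖ : ‖v‖ ≤ R}`. -/
theorem tikhonov_error_bound
    {X : Type*} [NormedAddCommGroup X] [InnerProductSpace ℝ X] [CompleteSpace X]
    (K : X →L[ℝ] X) (hK : IsCompactOperator ⇑K) (hinj : Function.Injective ⇑K)
    (x0 y0 yδ : X) (hy0 : y0 = K x0)
    (α : ℝ) (hα : 0 < α)
    (x : X) (hx : (adjoint K) (K x) + α • x = (adjoint K) yδ) :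
    ∀ R > (0:ℝ),
      ‖x - x0‖ ≤ ‖y0 - yδ‖ / (2 * Real.sqrt α)
        + sInf {d : ℝ | ∃ v : X, ‖v‖ ≤ R ∧ d = ‖x0 - (adjoint K) v‖}
        + Real.sqrt α / 2 * R := by
  intro R hR
  set s := Real.sqrt α with hs
  have hs0 : 0 < s := Real.sqrt_pos.mpr hα
  have hs2 : s ^ 2 = α := Real.sq_sqrt hα.le
  set e := x - x0 with he
  have key : ∀ v : X, ‖v‖ ≤ R →
      ‖e‖ ≤ ‖y0 - yδ‖ / (2 * s) + ‖x0 - (adjoint K) v‖ + s / 2 * R := by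
    intro v hv
    have hid : ⟪K x, K e⟫_ℝ + α * ⟪x, e⟫_ℝ = ⟪yδ, K e⟫_ℝ := by
      have h := congrArg (fun w => ⟪w, e⟫_ℝ) hx
      simpa [inner_add_left, real_inner_smul_left,
        ContinuousLinearMap.adjoint_inner_left] using h
    have h1 : K x = K e + y0 := by
      rw [he, map_sub, hy0]; abel
    have h2 : x = e + x0 := by rw [he]; abel
    have main : ‖K e‖ ^ 2 + α * ‖e‖ ^ 2
        = ⟪yδ, K e⟫_ℝ - ⟪y0, K e⟫_ℝ - α * ⟪x0, e⟫_ℝ := by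
      have hid' := hid
      rw [h1] at hid'
      nth_rewrite 1 [h2] at hid'
      rw [inner_add_left, inner_add_left, real_inner_self_eq_norm_sq,
        real_inner_self_eq_norm_sq] at hid'
      ring_nf at hid' ⊢
      linarith
    have hsplit : ⟪x0, e⟫_ℝ = ⟪x0 - (adjoint K) v, e⟫_ℝ + ⟪v, K e⟫_ℝ := by
      rw [inner_sub_left, ← ContinuousLinearMap.adjoint_inner_left]; ring
    set a := ‖K e‖ with ha
    set b := ‖e‖ with hb
    set d := ‖x0 - (adjoint K) v‖ with hd
    set δ := ‖y0 - yδ‖ with hδ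
    have ha0 : 0 ≤ a := norm_nonneg _
    have hb0 : 0 ≤ b := norm_nonneg _
    have hd0 : 0 ≤ d := norm_nonneg _
    have hδ0 : 0 ≤ δ := norm_nonneg _
    have hA : ⟪yδ, K e⟫_ℝ - ⟪y0, K e⟫_ℝ ≤ δ * a := by
      have h := real_inner_le_norm (yδ - y0) (K e)
      rw [inner_sub_left] at h
      rw [hδ, norm_sub_rev y0 yδ]
      exact h
    have hB : -⟪x0 - (adjoint K) v, e⟫_ℝ ≤ d * b := by
      have h := abs_real_inner_le_norm (x0 - (adjoint K) v) e
      have := neg_abs_le (⟪x0 - (adjoint K) v, e⟫_ℝ)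
      linarith
    have hC : -⟪v, K e⟫_ℝ ≤ R * a := by
      have h := abs_real_inner_le_norm v (K e)
      have h2 := neg_abs_le (⟪v, K e⟫_ℝ)
      have : ‖v‖ * a ≤ R * a := mul_le_mul_of_nonneg_right hv ha0
      linarith
    have quad : a ^ 2 + α * b ^ 2 ≤ (δ + α * R) * a + α * d * b := by
      have h := main
      rw [hsplit] at h
      nlinarith [mul_le_mul_of_nonneg_left hB hα.le,
        mul_le_mul_of_nonneg_left hC hα.le]
    rw [← hs2] at quad
    exact tikhonov_aux a b d δ s R ha0 hb0 hd0 hδ0 hR hs0 quad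
  have hne : {d : ℝ | ∃ v : X, ‖v‖ ≤ R ∧ d = ‖x0 - (adjoint K) v‖}.Nonempty :=
    ⟨‖x0 - (adjoint K) 0‖, 0, by simpa using hR.le, rfl⟩
  have h : ‖e‖ - ‖y0 - yδ‖ / (2 * s) - s / 2 * R ≤
      sInf {d : ℝ | ∃ v : X, ‖v‖ ≤ R ∧ d = ‖x0 - (adjoint K) v‖} :=
    le_csInf hne (fun d hd => by
    obtain ⟨v, hv, rfl⟩ := hd
    have := key v hv
    linarith)
  linarith
end

section
/- Let $A$ be a compact linear operator on a Hilbert space $X$ and $\alpha > 0$. Then the operator norm of $(A^*A + \alpha\,\mathrm{id})^{-1} A^*$ is at most $\frac{1}{2\sqrt{\alpha}}$. -/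
open MeasureTheory Set ContinuousLinearMap

/-- Spectral bound for Tikhonov regularisation: if `(A*A + α id) x = A* y` for a compact
operator `A` on a Hilbert space and `α > 0`, then `‖x‖ ≤ ‖y‖ / (2√α)`; i.e. the operator
`(A*A + α id)⁻¹ A*` has operator norm at most `1/(2√α)`. -/
theorem tikhonov_resolvent_norm_bound
    {X : Type*} [NormedAddCommGroup X] [InnerProductSpace ℝ X] [CompleteSpace X]
    (A : X →L[ℝ] X) (hA : IsCompactOperator ⇑A)
    (α : ℝ) (hα : 0 < α)
    (x y : X) (hx : (adjoint A) (A x) + α • x = (adjoint A) y) :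
    ‖x‖ ≤ 1 / (2 * Real.sqrt α) * ‖y‖ := by
  have h1 : (inner ℝ ((adjoint A) (A x) + α • x) x : ℝ) = inner ℝ ((adjoint A) y) x := by
    rw [hx]
  rw [inner_add_left, real_inner_smul_left, adjoint_inner_left, adjoint_inner_left,
    real_inner_self_eq_norm_sq, real_inner_self_eq_norm_sq] at h1
  have h2 : (inner ℝ y (A x) : ℝ) ≤ ‖y‖ * ‖A x‖ := real_inner_le_norm y (A x)
  have h3 : ‖A x‖ ^ 2 + α * ‖x‖ ^ 2 ≤ ‖y‖ * ‖A x‖ := by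
    linarith
  have h4 : α * ‖x‖ ^ 2 ≤ ‖y‖ ^ 2 / 4 := by nlinarith [sq_nonneg (‖A x‖ - ‖y‖ / 2)]
  have hs : (0:ℝ) < Real.sqrt α := Real.sqrt_pos.mpr hα
  have h5 : (2 * Real.sqrt α * ‖x‖) ^ 2 ≤ ‖y‖ ^ 2 := by
    have : Real.sqrt α ^ 2 = α := Real.sq_sqrt hα.le
    nlinarith
  have h6 : 2 * Real.sqrt α * ‖x‖ ≤ ‖y‖ := by
    nlinarith [norm_nonneg y, mul_nonneg (by positivity : (0:ℝ) ≤ 2 * Real.sqrt α) (norm_nonneg x)]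
  rw [div_mul_eq_mul_div, one_mul, le_div_iff₀ (by positivity)]
  linarith
end
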